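/- arXiv:1505.05246 — 4 statements merged into one kernel-verified Lean document; each statement's English description precedes it below -/
import Mathlib

section
/- For any integer $n \geq 2$, $\sum_{k=1}^{n-1} \frac{1}{\sin(k\pi/n)} \geq \frac{2n}{\pi} \ln\left(\frac{\cos(\pi/(2n))}{\sin(\pi/(2n))}\right)$. -/
open Real Finset MeasureTheory

/-!
`1 / sin` is convex on `(0, π)` (the inverse of a positive concave function), so on each
`[kπ/n, (k+1)π/n]` its integral is at most the trapezoid
`(π/n) (1 / sin (kπ/n) + 1 / sin ((k+1)π/n)) / 2`.
Summing over `1 ≤ k ≤ n - 2` and adding the two nonnegative half end terms bounds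
`∫_{π/n}^{π-π/n} dx / sin x = 2 log cot (π/(2n))` (antiderivative `log tan (x/2)`)
by `(π/n) ∑_{k=1}^{n-1} 1 / sin (kπ/n)`.
-/

theorem ConvexOn.apply_add_apply_reflect_le {f : ℝ → ℝ} {a b x : ℝ}
    (hf : ConvexOn ℝ (Set.Icc a b) f) (hx : x ∈ Set.Icc a b) :
    f x + f (a + b - x) ≤ f a + f b := by
  obtain ⟨hax, hxb⟩ := hx
  rcases hax.eq_or_lt with rfl | hax
  · simp
  have hab : 0 < b - a := by linarith
  have ha : a ∈ Set.Icc a b := Set.left_mem_Icc.2 (by linarith)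
  have hb : b ∈ Set.Icc a b := Set.right_mem_Icc.2 (by linarith)
  have ht : 0 ≤ (b - x) / (b - a) := div_nonneg (by linarith) hab.le
  have hs : 0 ≤ (x - a) / (b - a) := div_nonneg (by linarith) hab.le
  have hts : (b - x) / (b - a) + (x - a) / (b - a) = 1 := by field_simp; ring
  have hleft := hf.2 ha hb ht hs hts
  have hright := hf.2 ha hb hs ht ((add_comm _ _).trans hts)
  have hx : (b - x) / (b - a) * a + (x - a) / (b - a) * b = x := by field_simp; ring
  have hy : (x - a) / (b - a) * a + (b - x) / (b - a) * b = a + b - x := by field_simp; ring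
  simp only [smul_eq_mul, hx, hy] at hleft hright
  calc f x + f (a + b - x)
      ≤ (b - x) / (b - a) * f a + (x - a) / (b - a) * f b
        + ((x - a) / (b - a) * f a + (b - x) / (b - a) * f b) := add_le_add hleft hright
    _ = f a + f b := by field_simp; ring

theorem ConvexOn.intervalIntegral_le_trapezoid {f : ℝ → ℝ} {a b : ℝ} (hab : a ≤ b)
    (hf : ConvexOn ℝ (Set.Icc a b) f) (hfi : IntervalIntegrable f volume a b) :
    ∫ x in a..b, f x ≤ (b - a) * (f a + f b) / 2 := by
  have hreflect : ∫ x in a..b, f (a + b - x) = ∫ x in a..b, f x := by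
    simp [intervalIntegral.integral_comp_sub_left]
  have hreflecti : IntervalIntegrable (fun x => f (a + b - x)) volume a b := by
    simpa using (hfi.comp_sub_left (a + b)).symm
  have hsum : ∫ x in a..b, (f x + f (a + b - x)) ≤ ∫ x in a..b, (f a + f b) :=
    intervalIntegral.integral_mono_on hab (hfi.add hreflecti) intervalIntegrable_const
      fun x hx => hf.apply_add_apply_reflect_le hx
  rw [intervalIntegral.integral_add hfi hreflecti, hreflect, intervalIntegral.integral_const,
    smul_eq_mul] at hsum
  linarith

theorem ConvexOn.intervalIntegral_le_sum_trapezoid {f : ℝ → ℝ} {h : ℝ} {p q : ℕ}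
    (hpq : p ≤ q) (hh : 0 ≤ h) (hf : ConvexOn ℝ (Set.Icc (p * h) (q * h)) f)
    (hfi : IntervalIntegrable f volume (p * h) (q * h)) :
    ∫ x in p * h..q * h, f x ≤ h * ∑ k ∈ Ico p q, (f (k * h) + f ((k + 1) * h)) / 2 := by
  have hsub : ∀ k ∈ Ico p q, Set.Icc (k * h) ((k + 1) * h) ⊆ Set.Icc (p * h) (q * h) := by
    intro k hk
    have hk := mem_Ico.1 hk
    apply Set.Icc_subset_Icc <;> gcongr <;> norm_cast <;> omega
  have hpiece : ∀ k ∈ Ico p q, IntervalIntegrable f volume (k * h) ((k + 1) * h) :=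
    fun k hk => hfi.mono_set (by
      rw [Set.uIcc_of_le (by gcongr; simp), Set.uIcc_of_le (by gcongr)]
      exact hsub k hk)
  rw [← intervalIntegral.sum_integral_adjacent_intervals_Ico (a := fun k : ℕ => k * h) hpq
    (fun k hk => by simpa using hpiece k (by simpa using hk)), mul_sum]
  refine sum_le_sum fun k hk => ?_
  push_cast
  calc ∫ x in k * h..(k + 1) * h, f x
      ≤ ((k + 1) * h - k * h) * (f (k * h) + f ((k + 1) * h)) / 2 :=
        (hf.subset (hsub k hk) (convex_Icc _ _)).intervalIntegral_le_trapezoid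
          (by gcongr; simp) (hpiece k hk)
    _ = h * ((f (k * h) + f ((k + 1) * h)) / 2) := by ring

theorem Finset.sum_Ico_trapezoid_le_sum_Icc {g : ℕ → ℝ} {p q : ℕ}
    (hg : ∀ k ∈ Icc p q, 0 ≤ g k) :
    ∑ k ∈ Ico p q, (g k + g (k + 1)) / 2 ≤ ∑ k ∈ Icc p q, g k := by
  have hleft : ∑ k ∈ Ico p q, g k ≤ ∑ k ∈ Icc p q, g k :=
    sum_le_sum_of_subset_of_nonneg Ico_subset_Icc_self fun k hk _ => hg k hk
  have hright : ∑ k ∈ Ico p q, g (k + 1) ≤ ∑ k ∈ Icc p q, g k := by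
    rw [sum_Ico_add' g]
    exact sum_le_sum_of_subset_of_nonneg (fun k hk => by simp at hk ⊢; omega)
      fun k hk _ => hg k hk
  rw [← sum_div, sum_add_distrib]
  linarith

theorem ConcaveOn.convexOn_inv {𝕜 E : Type*}
    [Field 𝕜] [LinearOrder 𝕜] [IsStrictOrderedRing 𝕜] [AddCommMonoid E] [Module 𝕜 E]
    {s : Set E} {f : E → 𝕜} (hf : ConcaveOn 𝕜 s f)
    (hpos : ∀ x ∈ s, 0 < f x) : ConvexOn 𝕜 s fun x => (f x)⁻¹ := by
  refine ⟨hf.1, fun x hx y hy a b ha hb hab => ?_⟩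
  have hmix : 0 < a • f x + b • f y := convex_Ioi 0 (hpos x hx) (hpos y hy) ha hb hab
  calc (f (a • x + b • y))⁻¹
      ≤ (a • f x + b • f y)⁻¹ := inv_anti₀ hmix (hf.2 hx hy ha hb hab)
    _ ≤ a • (f x)⁻¹ + b • (f y)⁻¹ := by
      simpa using (convexOn_zpow (𝕜 := 𝕜) (-1)).2 (hpos x hx) (hpos y hy) ha hb hab

theorem convexOn_inv_sin : ConvexOn ℝ (Set.Ioo 0 π) fun x => (sin x)⁻¹ :=
  (strictConcaveOn_sin_Icc.concaveOn.subset Set.Ioo_subset_Icc_self (convex_Ioo 0 π)).convexOn_inv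
    fun _ hx => sin_pos_of_pos_of_lt_pi hx.1 hx.2

theorem hasDerivAt_log_tan_half {x : ℝ} (hx : x ∈ Set.Ioo 0 π) :
    HasDerivAt (fun y => log (tan (y / 2))) (sin x)⁻¹ x := by
  have hcos : 0 < cos (x / 2) :=
    cos_pos_of_mem_Ioo ⟨by linarith [hx.1, pi_pos], by linarith [hx.2]⟩
  have hsin : 0 < sin (x / 2) :=
    sin_pos_of_pos_of_lt_pi (by linarith [hx.1]) (by linarith [hx.2, pi_pos])
  have htan : HasDerivAt (tan ∘ fun y => y / 2) (1 / cos (x / 2) ^ 2 * (1 / 2)) x :=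
    (Real.hasDerivAt_tan hcos.ne').comp x ((hasDerivAt_id' x).div_const 2)
  refine (htan.log (tan_pos_of_pos_of_lt_pi_div_two (by linarith [hx.1])
    (by linarith [hx.2])).ne').congr_deriv ?_
  simp only [Function.comp_apply]
  rw [tan_eq_sin_div_cos, show x = 2 * (x / 2) by ring, sin_two_mul]
  field_simp

theorem integral_inv_sin {a b : ℝ} (ha : a ∈ Set.Ioo 0 π) (hb : b ∈ Set.Ioo 0 π) :
    ∫ x in a..b, (sin x)⁻¹ = log (tan (b / 2)) - log (tan (a / 2)) := by
  have hsub : Set.uIcc a b ⊆ Set.Ioo 0 π := Set.ordConnected_Ioo.uIcc_subset ha hb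
  exact intervalIntegral.integral_eq_sub_of_hasDerivAt
    (fun x hx => hasDerivAt_log_tan_half (hsub hx))
    ((convexOn_inv_sin.continuousOn isOpen_Ioo).mono hsub).intervalIntegrable

theorem integral_inv_sin_sub {a : ℝ} (ha : a ∈ Set.Ioo 0 π) :
    ∫ x in a..π - a, (sin x)⁻¹ = 2 * log (cos (a / 2) / sin (a / 2)) := by
  rw [integral_inv_sin ha ⟨by linarith [ha.2], by linarith [ha.1]⟩,
    show (π - a) / 2 = π / 2 - a / 2 by ring, tan_pi_div_two_sub, log_inv, tan_eq_sin_div_cos,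
    ← inv_div, log_inv]
  ring

theorem natCast_mul_pi_div_mem_Ioo {n k : ℕ} (hk : k ∈ Icc 1 (n - 1)) :
    (k : ℝ) * (π / n) ∈ Set.Ioo 0 π := by
  obtain ⟨hk1, hkn⟩ := mem_Icc.1 hk
  have hk0 : (0 : ℝ) < k := by exact_mod_cast hk1
  have hkn : (k : ℝ) < n := by exact_mod_cast (show k < n by omega)
  have hn0 : (0 : ℝ) < n := hk0.trans hkn
  refine ⟨mul_pos hk0 (div_pos pi_pos hn0), ?_⟩
  rw [← mul_div_assoc, div_lt_iff₀ hn0]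
  nlinarith [pi_pos]

theorem two_mul_log_cot_le_sum_inv_sin {n : ℕ} (hn : 2 ≤ n) :
    2 * log (cos (π / (2 * n)) / sin (π / (2 * n))) ≤
      π / n * ∑ k ∈ Icc 1 (n - 1), (sin (k * (π / n)))⁻¹ := by
  set θ := π / n with hθ_def
  have hθ : 0 < θ := div_pos pi_pos (Nat.cast_pos.2 (by omega))
  have hnode : ∀ k ∈ Icc 1 (n - 1), (k : ℝ) * θ ∈ Set.Ioo 0 π := fun k hk =>
    natCast_mul_pi_div_mem_Ioo hk
  have hsub : Set.Icc ((1 : ℕ) * θ) ((n - 1 : ℕ) * θ) ⊆ Set.Ioo 0 π :=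
    Set.ordConnected_Ioo.out (hnode 1 (by simp; omega)) (hnode (n - 1) (by simp; omega))
  have hint : IntervalIntegrable (fun x => (sin x)⁻¹) volume
      ((1 : ℕ) * θ) ((n - 1 : ℕ) * θ) :=
    ((convexOn_inv_sin.continuousOn isOpen_Ioo).mono hsub).intervalIntegrable_of_Icc
      (by gcongr; omega)
  have htrap := (convexOn_inv_sin.subset hsub (convex_Icc _ _)).intervalIntegral_le_sum_trapezoid
    (by omega) hθ.le hint
  have hlast : ((n - 1 : ℕ) : ℝ) * θ = π - θ := by
    rw [Nat.cast_sub (by omega), hθ_def]; field_simp; ring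
  rw [Nat.cast_one, one_mul, hlast, integral_inv_sin_sub (by simpa using hnode 1 (by simp; omega)),
    show θ / 2 = π / (2 * n) by rw [hθ_def]; ring] at htrap
  have hsum := sum_Ico_trapezoid_le_sum_Icc fun k hk =>
    (inv_pos.2 (sin_pos_of_pos_of_lt_pi (hnode k hk).1 (hnode k hk).2)).le
  push_cast at hsum
  exact htrap.trans (by gcongr)

theorem sum_inv_sin_ge (n : ℕ) (hn : 2 ≤ n) :
    ∑ k ∈ Finset.Icc 1 (n - 1), 1 / Real.sin (k * π / n) ≥
      (2 * n / π) * Real.log (Real.cos (π / (2 * n)) / Real.sin (π / (2 * n))) := by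
  have hθ : 0 < π / n := div_pos pi_pos (Nat.cast_pos.2 (by omega))
  simp only [one_div, mul_div_assoc, ge_iff_le]
  calc 2 * (n / π) * log (cos (π / (2 * n)) / sin (π / (2 * n)))
      = 2 * log (cos (π / (2 * n)) / sin (π / (2 * n))) / (π / n) := by field_simp
    _ ≤ ∑ k ∈ Icc 1 (n - 1), (sin (k * (π / n)))⁻¹ := by
      rw [div_le_iff₀' hθ]
      exact two_mul_log_cot_le_sum_inv_sin hn
end

section
/- The function $\mathbf{f}(\varphi) = \frac{1}{8|\sin(\varphi/2)|}\left(\frac{2}{\sin^2(\varphi/2)} - 1\right) + \cos\varphi$, defined for $\varphi \in \mathbb{R} \setminus 2\pi\mathbb{Z}$, satisfies $\mathbf{f}(\varphi) \geq \mathbf{f}(\pi) = -7/8$ for all $\varphi$ in its domain. -/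
open Real

noncomputable def fbold (φ : ℝ) : ℝ :=
  1 / (8 * |Real.sin (φ / 2)|) * (2 / Real.sin (φ / 2) ^ 2 - 1) + Real.cos φ

lemma fbold_pi : fbold π = -(7 / 8) := by
  unfold fbold
  rw [Real.sin_pi_div_two, Real.cos_pi]
  norm_num

theorem fbold_ge_at_pi :
    fbold π = -(7 / 8) ∧
      ∀ φ : ℝ, (∀ k : ℤ, φ ≠ 2 * k * π) → fbold φ ≥ fbold π := by
  refine ⟨fbold_pi, fun φ hφ => ?_⟩
  rw [fbold_pi]
  have hs : Real.sin (φ / 2) ≠ 0 := by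
    intro h
    obtain ⟨n, hn⟩ := Real.sin_eq_zero_iff.mp h
    exact hφ n (by linarith)
  set t := |Real.sin (φ / 2)| with ht
  have ht0 : 0 < t := abs_pos.mpr hs
  have ht1 : t ≤ 1 := Real.abs_sin_le_one _
  have h2 : Real.sin (φ / 2) ^ 2 = t ^ 2 := (sq_abs _).symm
  have hcos : Real.cos φ = 1 - 2 * t ^ 2 := by
    have h : Real.cos φ = Real.cos (2 * (φ / 2)) := by ring_nf
    rw [h, Real.cos_two_mul']
    nlinarith [Real.sin_sq_add_cos_sq (φ / 2), h2]
  have expr : fbold φ = 1 / (4 * t ^ 3) - 1 / (8 * t) + 1 - 2 * t ^ 2 := by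
    unfold fbold
    rw [hcos, h2]
    field_simp
    ring
  rw [expr, ge_iff_le, ← sub_nonneg]
  have heq : 1 / (4 * t ^ 3) - 1 / (8 * t) + 1 - 2 * t ^ 2 - (-(7 / 8))
      = (2 - t ^ 2 + 15 * t ^ 3 - 16 * t ^ 5) / (8 * t ^ 3) := by
    field_simp
    ring
  rw [heq]
  apply div_nonneg _ (by positivity)
  nlinarith [mul_nonneg (sub_nonneg.mpr ht1) (by positivity : (0:ℝ) ≤ 16 * t ^ 4 + 16 * t ^ 3 + t ^ 2 + 2 * t + 2)]
end

section
/- For every integer $n \geq 3$ that is odd, $\sum_{k=1}^{(n-1)/2} \frac{(-1)^{k+1}}{\tan(k\pi/n)} > 0$. -/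
open Real Finset

lemma alt_sum_aux (f : ℕ → ℝ) :
    ∀ j : ℕ, (∀ k, 1 ≤ k → k + 1 ≤ 2 * j + 1 → f (k + 1) < f k) →
      f (2 * j + 1) ≤ ∑ k ∈ Finset.Icc 1 (2 * j + 1), (-1 : ℝ) ^ (k + 1) * f k := by
  intro j
  induction j with
  | zero => intro _; simp
  | succ j ih =>
      intro hmono
      have h1 : ∑ k ∈ Finset.Icc 1 (2 * j + 2), (-1 : ℝ) ^ (k + 1) * f k
          = ∑ k ∈ Finset.Icc 1 (2 * j + 1), (-1 : ℝ) ^ (k + 1) * f k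
            + (-1 : ℝ) ^ (2 * j + 3) * f (2 * j + 2) := by
        have := Finset.sum_Icc_succ_top (a := 1) (b := 2 * j + 1)
          (f := fun k => (-1 : ℝ) ^ (k + 1) * f k) (by omega)
        simpa using this
      have h2 : ∑ k ∈ Finset.Icc 1 (2 * j + 3), (-1 : ℝ) ^ (k + 1) * f k
          = ∑ k ∈ Finset.Icc 1 (2 * j + 2), (-1 : ℝ) ^ (k + 1) * f k
            + (-1 : ℝ) ^ (2 * j + 4) * f (2 * j + 3) := by
        have := Finset.sum_Icc_succ_top (a := 1) (b := 2 * j + 2)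
          (f := fun k => (-1 : ℝ) ^ (k + 1) * f k) (by omega)
        simpa [show 2 * j + 2 + 1 = 2 * j + 3 by ring] using this
      have hodd : (-1 : ℝ) ^ (2 * j + 3) = -1 :=
        Odd.neg_one_pow ⟨j + 1, by ring⟩
      have heven : (-1 : ℝ) ^ (2 * j + 4) = 1 :=
        Even.neg_one_pow ⟨j + 2, by ring⟩
      have hih := ih (fun k hk hk' => hmono k hk (by omega))
      have hstep : f (2 * j + 2) < f (2 * j + 1) :=
        hmono (2 * j + 1) (by omega) (by omega)
      have hgoal : 2 * (j + 1) + 1 = 2 * j + 3 := by ring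
      rw [hgoal, h2, h1, hodd, heven]
      nlinarith [hih, hstep]

lemma alt_sum_pos (f : ℕ → ℝ) (m : ℕ) (hm : 1 ≤ m)
    (hpos : ∀ k, 1 ≤ k → k ≤ m → 0 < f k)
    (hmono : ∀ k, 1 ≤ k → k + 1 ≤ m → f (k + 1) < f k) :
    0 < ∑ k ∈ Finset.Icc 1 m, (-1 : ℝ) ^ (k + 1) * f k := by
  rcases Nat.even_or_odd m with ⟨j, hj⟩ | ⟨j, hj⟩
  · -- m = 2j, with j ≥ 1; m = 2*(j-1) + 2
    obtain ⟨i, hi⟩ : ∃ i, j = i + 1 := ⟨j - 1, by omega⟩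
    have hm2 : m = 2 * i + 2 := by omega
    subst hm2
    have h1 : ∑ k ∈ Finset.Icc 1 (2 * i + 2), (-1 : ℝ) ^ (k + 1) * f k
        = ∑ k ∈ Finset.Icc 1 (2 * i + 1), (-1 : ℝ) ^ (k + 1) * f k
          + (-1 : ℝ) ^ (2 * i + 3) * f (2 * i + 2) := by
      have := Finset.sum_Icc_succ_top (a := 1) (b := 2 * i + 1)
        (f := fun k => (-1 : ℝ) ^ (k + 1) * f k) (by omega)
      simpa using this
    have hodd : (-1 : ℝ) ^ (2 * i + 3) = -1 := Odd.neg_one_pow ⟨i + 1, by ring⟩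
    have hkey := alt_sum_aux f i (fun k hk hk' => hmono k hk (by omega))
    have hstep : f (2 * i + 2) < f (2 * i + 1) :=
      hmono (2 * i + 1) (by omega) (by omega)
    rw [h1, hodd]
    nlinarith [hkey, hstep]
  · have hm2 : m = 2 * j + 1 := by omega
    subst hm2
    have hkey := alt_sum_aux f j hmono
    have := hpos (2 * j + 1) (by omega) le_rfl
    linarith

theorem alternating_cot_sum_pos (n : ℕ) (hn : 3 ≤ n) (hodd : Odd n) :
    0 < ∑ k ∈ Finset.Icc 1 ((n - 1) / 2), (-1 : ℝ) ^ (k + 1) / Real.tan (k * π / n) := by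
  have hnpos : (0 : ℝ) < n := by positivity
  have hπ : (0 : ℝ) < π := Real.pi_pos
  set m := (n - 1) / 2 with hm
  have hm1 : 1 ≤ m := by omega
  have hang : ∀ k : ℕ, 1 ≤ k → k ≤ m → 0 < (k : ℝ) * π / n ∧ (k : ℝ) * π / n < π / 2 := by
    intro k hk hkm
    constructor
    · have : (0 : ℝ) < (k : ℝ) := by exact_mod_cast hk
      positivity
    · rw [div_lt_div_iff₀ hnpos (by norm_num)]
      have h2k : 2 * k < n := by omega
      have : (2 * k : ℝ) < n := by exact_mod_cast h2k
      nlinarith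
  have htanpos : ∀ k : ℕ, 1 ≤ k → k ≤ m → 0 < Real.tan ((k : ℝ) * π / n) := by
    intro k hk hkm
    obtain ⟨h1, h2⟩ := hang k hk hkm
    exact Real.tan_pos_of_pos_of_lt_pi_div_two h1 h2
  have hconv : ∑ k ∈ Finset.Icc 1 m, (-1 : ℝ) ^ (k + 1) / Real.tan (k * π / n)
      = ∑ k ∈ Finset.Icc 1 m, (-1 : ℝ) ^ (k + 1) * (1 / Real.tan (k * π / n)) := by
    apply Finset.sum_congr rfl
    intro k _
    ring
  rw [hconv]
  apply alt_sum_pos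
  · exact hm1
  · intro k hk hkm
    exact one_div_pos.mpr (htanpos k hk hkm)
  · intro k hk hkm
    have h1 := hang k hk (by omega)
    have h2 := hang (k + 1) (by omega) hkm
    push_cast at h2
    have hlt : (k : ℝ) * π / n < ((k : ℝ) + 1) * π / n := by
      gcongr
      linarith
    have htlt : Real.tan ((k : ℝ) * π / n) < Real.tan (((k : ℝ) + 1) * π / n) := by
      apply Real.strictMonoOn_tan
      · exact ⟨by linarith [h1.1], h1.2⟩
      · exact ⟨by linarith [h2.1], h2.2⟩
      · exact hlt
    have := one_div_lt_one_div_of_lt (htanpos k hk (by omega)) htlt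
    simpa [Nat.cast_add, Nat.cast_one] using this
end

section
/- For all integers $n \geq 42$, $f_1(n,2) := -\frac{n}{2} + \frac{1}{2}\sum_{k=1}^{n-1}\left(\frac{1}{\sin(k\pi/n)} - \sin\frac{k\pi}{n}\right) > 0$. -/
/-!
Since `sin x ≤ x` and `sin x = sin (π - x)`, the term `1 / sin (kπ/n)` is at least `n / (π k)` and
at least `n / (π (n - k))`. Using the first bound for `k ≤ m := n / 2` and the second for `k > m`
gives `∑ 1 / sin (kπ/n) ≥ (n/π) (H_m + H_{n-1-m})`, and for `n ≥ 42` both harmonic numbers are at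
least `H_20 > π`, so this sum exceeds `2n`. The sum of the sines is at most `n - 1`.
-/

open Real Finset

theorem harmonic_mono : Monotone harmonic :=
  monotone_nat_of_le_succ fun n => by
    rw [harmonic_succ]
    exact le_add_of_nonneg_right (by positivity)

theorem pi_lt_harmonic_twenty : π < harmonic 20 := by
  have h : (3.15 : ℝ) < harmonic 20 := by
    norm_num [harmonic, sum_range_succ]
  linarith [pi_lt_d2]

theorem Finset.sum_Icc_one_eq_add_sum_reflect {M : Type*} [AddCommMonoid M] (f : ℕ → M)
    {m n : ℕ} (hmn : m < n) :
    ∑ k ∈ Icc 1 (n - 1), f k = ∑ k ∈ Icc 1 m, f k + ∑ k ∈ Icc 1 (n - 1 - m), f (n - k) := by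
  have hIcc (a : ℕ) : Icc 1 a = Ioc 0 a := Icc_add_one_left_eq_Ioc 0 a
  rw [hIcc, hIcc, hIcc, ← sum_Ioc_consecutive f (Nat.zero_le m) (by omega : m ≤ n - 1)]
  congr 1
  refine sum_nbij' (fun k => n - k) (fun k => n - k) ?_ ?_ ?_ ?_ ?_ <;> intro k hk <;>
    simp only [mem_Ioc] at hk ⊢
  iterate 4 omega
  rw [Nat.sub_sub_self (by omega)]

theorem sin_natCast_sub_mul_pi_div {k n : ℕ} (hkn : k ≤ n) :
    sin (((n - k : ℕ) : ℝ) * π / n) = sin (k * π / n) := by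
  rcases Nat.eq_zero_or_pos n with rfl | hn
  · simp
  rw [Nat.cast_sub hkn, ← sin_pi_sub]
  congr 1
  field_simp
  ring

theorem one_div_le_one_div_sin {x : ℝ} (hx₀ : 0 < x) (hxπ : x < π) : 1 / x ≤ 1 / sin x :=
  one_div_le_one_div_of_le (sin_pos_of_pos_of_lt_pi hx₀ hxπ) (sin_le hx₀.le)

theorem div_pi_mul_harmonic_le_sum_one_div_sin {m n : ℕ} (hmn : m < n) :
    n / π * harmonic m ≤ ∑ k ∈ Icc 1 m, 1 / sin (k * π / n) := by
  have hn : (0 : ℝ) < n := by exact_mod_cast (Nat.zero_le m).trans_lt hmn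
  rw [harmonic_eq_sum_Icc, Rat.cast_sum, mul_sum]
  refine sum_le_sum fun k hk => ?_
  obtain ⟨hk₁, hkm⟩ := mem_Icc.mp hk
  have hk : (0 : ℝ) < k := by exact_mod_cast hk₁
  have hkn : (k : ℝ) < n := by exact_mod_cast hkm.trans_lt hmn
  calc n / π * ((k⁻¹ : ℚ) : ℝ) = 1 / (k * π / n) := by push_cast; field_simp
    _ ≤ 1 / sin (k * π / n) := one_div_le_one_div_sin (by positivity) <| by
        rw [div_lt_iff₀ hn]
        nlinarith [pi_pos]

theorem two_mul_lt_sum_one_div_sin {n : ℕ} (hn : 42 ≤ n) :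
    2 * (n : ℝ) < ∑ k ∈ Icc 1 (n - 1), 1 / sin (k * π / n) := by
  have hm : n / 2 < n := by omega
  rw [sum_Icc_one_eq_add_sum_reflect _ hm]
  have hreflect : ∑ k ∈ Icc 1 (n - 1 - n / 2), 1 / sin (((n - k : ℕ) : ℝ) * π / n)
      = ∑ k ∈ Icc 1 (n - 1 - n / 2), 1 / sin (k * π / n) :=
    sum_congr rfl fun k hk => by
      rw [sin_natCast_sub_mul_pi_div (by have := (mem_Icc.mp hk).2; omega)]
  have hH : 2 * π < harmonic (n / 2) + harmonic (n - 1 - n / 2) := by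
    have h₁ : (harmonic 20 : ℝ) ≤ harmonic (n / 2) := by
      exact_mod_cast harmonic_mono (by omega : 20 ≤ n / 2)
    have h₂ : (harmonic 20 : ℝ) ≤ harmonic (n - 1 - n / 2) := by
      exact_mod_cast harmonic_mono (by omega : 20 ≤ n - 1 - n / 2)
    linarith [pi_lt_harmonic_twenty]
  have hn₀ : (0 : ℝ) < n := by exact_mod_cast (by omega : 0 < n)
  calc 2 * (n : ℝ) = n / π * (2 * π) := by field_simp
    _ < n / π * (harmonic (n / 2) + harmonic (n - 1 - n / 2)) := by gcongr
    _ ≤ _ := by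
      rw [hreflect, mul_add]
      exact add_le_add (div_pi_mul_harmonic_le_sum_one_div_sin hm)
        (div_pi_mul_harmonic_le_sum_one_div_sin (by omega))

theorem sum_sin_mul_pi_div_le {n : ℕ} (hn : 0 < n) :
    ∑ k ∈ Icc 1 (n - 1), sin (k * π / n) ≤ (n : ℝ) - 1 := by
  calc ∑ k ∈ Icc 1 (n - 1), sin (k * π / n) ≤ ∑ k ∈ Icc 1 (n - 1), (1 : ℝ) :=
        sum_le_sum fun k _ => sin_le_one _
    _ = (n : ℝ) - 1 := by simp [Nat.cast_sub (Nat.one_le_iff_ne_zero.mpr hn.ne')]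

theorem f1_n_two_pos (n : ℕ) (hn : 42 ≤ n) :
    0 < -(n : ℝ) / 2 + (1 / 2 : ℝ) * ∑ k ∈ Finset.Icc 1 (n - 1),
        (1 / Real.sin (k * π / n) - Real.sin (k * π / n)) := by
  rw [sum_sub_distrib]
  linarith [two_mul_lt_sum_one_div_sin hn, sum_sin_mul_pi_div_le (by omega : 0 < n)]
end
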